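/- Let n ≥ 1 be a natural number. Then w(f_n)(x) > 0 for all x in the open interval (j₁(f_n'), j₁(f_n)), where j₁(f_n') is the first positive zero of f_n' and j₁(f_n) is the first positive zero of f_n (equivalently, the interval (j_{n−1/2,1}, j_{n+1/2,1}) between the first positive zeros of J_{n−1/2} and J_{n+1/2}). -/

import Mathlib

/-- Determinant of the 3x3 Hankel-Wronskian matrix of h (rows of 2nd..4th derivatives). -/
noncomputable def w (f : ℝ → ℝ) (x : ℝ) : ℝ :=
  Matrix.det !![deriv^[2] f x, deriv f x, f x;
    deriv^[3] f x, deriv^[2] f x, deriv f x;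
    deriv^[4] f x, deriv^[3] f x, deriv^[2] f x]

/-- Bessel function of the first kind (for `x > 0`). -/
noncomputable def besselJ (ν : ℝ) (x : ℝ) : ℝ :=
  ∑' k : ℕ, (-1 : ℝ) ^ k / ((Nat.factorial k : ℝ) * Real.Gamma ((k : ℝ) + ν + 1)) *
    (x / 2) ^ (2 * (k : ℝ) + ν)

/-- `fn n x = √(π/2)·x^(n+1/2)·J_(n+1/2)(x)`, via the equivalent recursive definition
`fn 0 = sin`, `fn (n+1) x = ∫_0^x t·fn n t dt`. -/
noncomputable def fn : ℕ → ℝ → ℝ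
  | 0 => fun x => Real.sin x
  | n + 1 => fun x => ∫ t in (0:ℝ)..x, t * fn n t

/-- First positive zero of a function on `(0,∞)`. -/
noncomputable def j1 (g : ℝ → ℝ) : ℝ := sInf {x : ℝ | 0 < x ∧ g x = 0}

/-!
The proof rests on the differential equation `x fₙ'' = 2n fₙ' - x fₙ`. Differentiating it twice
expresses `fₙ''`, `fₙ'''`, `fₙ''''` through `fₙ`, `fₙ'` and `x`, and `x⁴ w(fₙ)` becomes a cubic form
in `(fₙ, -fₙ')` with nonnegative coefficients once `n ≥ 1`; so `w(fₙ) > 0` wherever `fₙ > 0 > fₙ'`.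
Below `j₁(fₙ)` we have `fₙ > 0`. Since `fₙ` vanishes at `0` and, as `j₁(fₙ) > 0`, at some positive
point, Rolle gives a positive zero of `fₙ'`, hence one at some `z < x` when `x > j₁(fₙ')`; on
`[z, x]` the function `x^(-2n) fₙ'` has derivative `-x^(-2n) fₙ < 0`, so `fₙ'(x) < 0`.
The zeros are those of Bessel functions because `fₙ' = x fₙ₋₁` and because integrating the sine
series term by term gives `fₙ = √(π/2) x^(n+1/2) J_(n+1/2)`.
-/

open Real Set MeasureTheory
open scoped Nat ContDiff

lemma eq_of_hasDerivAt_eq {f g f' : ℝ → ℝ} (hf : ∀ x, HasDerivAt f (f' x) x)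
    (hg : ∀ x, HasDerivAt g (f' x) x) (x₀ : ℝ) (h : f x₀ = g x₀) : f = g :=
  eq_of_fderiv_eq (𝕜 := ℝ) (fun x => (hf x).differentiableAt) (fun x => (hg x).differentiableAt)
    (fun x => by rw [(hf x).hasFDerivAt.fderiv, (hg x).hasFDerivAt.fderiv]) x₀ h

lemma mul_deriv_deriv_eq_of_mul_deriv_eq {g r : ℝ → ℝ} {b : ℝ} (hg : Differentiable ℝ g)
    (hg' : Differentiable ℝ (deriv g)) (hr : Differentiable ℝ r)
    (h : ∀ y, y * deriv g y = b * g y + r y) (x : ℝ) :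
    x * deriv (deriv g) x = (b - 1) * deriv g x + deriv r x := by
  have hl : HasDerivAt (fun y => y * deriv g y) (1 * deriv g x + x * deriv (deriv g) x) x :=
    (hasDerivAt_id x).mul (hg' x).hasDerivAt
  have hr : HasDerivAt (fun y => b * g y + r y) (b * deriv g x + deriv r x) x :=
    ((hg x).hasDerivAt.const_mul b).add (hr x).hasDerivAt
  have := hl.unique (by simpa only [h] using hr)
  linarith

lemma j1_nonneg (g : ℝ → ℝ) : 0 ≤ j1 g :=
  Real.sInf_nonneg fun _ hx => hx.1.le

lemma j1_congr {g h : ℝ → ℝ} (hgh : ∀ x, 0 < x → (g x = 0 ↔ h x = 0)) : j1 g = j1 h := by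
  simp only [j1]
  congr 1
  ext x
  exact and_congr_right (hgh x)

lemma exists_zero_of_j1_pos {g : ℝ → ℝ} (h : 0 < j1 g) : ∃ y, 0 < y ∧ g y = 0 := by
  rcases Set.eq_empty_or_nonempty {x | 0 < x ∧ g x = 0} with he | hne
  · simp [j1, he] at h
  · exact hne

lemma exists_zero_lt_of_j1_lt {g : ℝ → ℝ} (hne : ∃ y, 0 < y ∧ g y = 0) {x : ℝ}
    (h : j1 g < x) : ∃ z, 0 < z ∧ z < x ∧ g z = 0 := by
  obtain ⟨z, ⟨hz, hgz⟩, hzx⟩ := exists_lt_of_csInf_lt hne h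
  exact ⟨z, hz, hzx, hgz⟩

lemma pos_of_lt_j1 {g : ℝ → ℝ} (hg : Continuous g) {δ : ℝ} (hδ : 0 < δ)
    (hpos : ∀ y ∈ Ioo 0 δ, 0 < g y) {x : ℝ} (hx : 0 < x) (hxj : x < j1 g) : 0 < g x := by
  by_contra! hgx
  have hδx : δ / 2 ≤ x := by
    by_contra! h
    exact hgx.not_gt (hpos x ⟨hx, by linarith⟩)
  obtain ⟨z, hz, hgz⟩ := intermediate_value_Icc' hδx hg.continuousOn
    ⟨hgx, (hpos _ ⟨by positivity, by linarith⟩).le⟩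
  have : j1 g ≤ z := csInf_le ⟨0, fun y hy => hy.1.le⟩ ⟨by linarith [hz.1], hgz⟩
  linarith [hz.2]

section ODE

variable {f : ℝ → ℝ} {a : ℝ}

lemma hasDerivAt_rpow_neg_mul_deriv (hf' : Differentiable ℝ (deriv f))
    (hode : ∀ x, x * deriv (deriv f) x = a * deriv f x - x * f x) {x : ℝ} (hx : 0 < x) :
    HasDerivAt (fun y => y ^ (-a) * deriv f y) (-(x ^ (-a) * f x)) x := by
  refine ((hasDerivAt_rpow_const (p := -a) (Or.inl hx.ne')).mul (hf' x).hasDerivAt).congr_deriv ?_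
  rw [rpow_sub_one hx.ne']
  field_simp
  linear_combination hode x

lemma deriv_neg_of_ode (hf' : Differentiable ℝ (deriv f))
    (hode : ∀ x, x * deriv (deriv f) x = a * deriv f x - x * f x) {z x : ℝ} (hz : 0 < z)
    (hzx : z < x) (hz0 : deriv f z = 0) (hpos : ∀ y ∈ Ioo z x, 0 < f y) : deriv f x < 0 := by
  have hd : ∀ y ∈ Icc z x, HasDerivAt (fun y => y ^ (-a) * deriv f y) (-(y ^ (-a) * f y)) y :=
    fun y hy => hasDerivAt_rpow_neg_mul_deriv hf' hode (hz.trans_le hy.1)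
  have hanti : StrictAntiOn (fun y => y ^ (-a) * deriv f y) (Icc z x) := by
    refine strictAntiOn_of_deriv_neg (convex_Icc z x)
      (fun y hy => (hd y hy).continuousAt.continuousWithinAt) fun y hy => ?_
    rw [interior_Icc] at hy
    rw [(hd y (Ioo_subset_Icc_self hy)).deriv, neg_lt_zero]
    exact mul_pos (rpow_pos_of_pos (hz.trans hy.1) _) (hpos y hy)
  have h := hanti (left_mem_Icc.2 hzx.le) (right_mem_Icc.2 hzx.le) hzx
  simp only [hz0, mul_zero] at h
  exact neg_of_mul_neg_right h (rpow_pos_of_pos (hz.trans hzx) _).le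

lemma pow_four_mul_w_of_ode (hf : ContDiff ℝ ∞ f)
    (hode : ∀ x, x * deriv (deriv f) x = a * deriv f x - x * f x) {x : ℝ} (hx : x ≠ 0) :
    x ^ 4 * w f x = 2 * a * x ^ 2 * f x ^ 3 - a * (3 * a - 2) * x * deriv f x * f x ^ 2
      + (2 * a * x ^ 2 + a ^ 2 * (a - 1)) * deriv f x ^ 2 * f x
      - a * (a - 2) * x * deriv f x ^ 3 := by
  have hd : ∀ k, Differentiable ℝ (deriv^[k] f) := fun k =>
    (hf.iterate_deriv k).differentiable (by simp)
  have d0 : Differentiable ℝ f := hd 0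
  have d1 : Differentiable ℝ (deriv f) := hd 1
  have d2 : Differentiable ℝ (deriv (deriv f)) := hd 2
  have d3 : Differentiable ℝ (deriv (deriv (deriv f))) := hd 3
  have hode3 : ∀ y, y * deriv (deriv (deriv f)) y
      = (a - 1) * deriv (deriv f) y + -(f y + y * deriv f y) := fun y => by
    rw [mul_deriv_deriv_eq_of_mul_deriv_eq (r := fun y => -(y * f y)) d1 d2
      (differentiable_id.mul d0).neg (by simpa [sub_eq_add_neg] using hode) y,
      ((hasDerivAt_id' y).fun_mul (d0 y).hasDerivAt).fun_neg.deriv, one_mul]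
  have hode4 : x * deriv (deriv (deriv (deriv f))) x
      = (a - 2) * deriv (deriv (deriv f)) x - 2 * deriv f x - x * deriv (deriv f) x := by
    rw [mul_deriv_deriv_eq_of_mul_deriv_eq (r := fun y => -(f y + y * deriv f y)) d2 d3
      (d0.add (differentiable_id.mul d1)).neg hode3 x,
      ((d0 x).hasDerivAt.fun_add ((hasDerivAt_id' x).fun_mul (d1 x).hasDerivAt)).fun_neg.deriv]
    ring
  have hw : w f x = Matrix.det !![deriv (deriv f) x, deriv f x, f x;
      deriv (deriv (deriv f)) x, deriv (deriv f) x, deriv f x;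
      deriv (deriv (deriv (deriv f))) x, deriv (deriv (deriv f)) x, deriv (deriv f) x] := rfl
  have h2 := hode x
  have h3 := hode3 x
  rw [hw, Matrix.det_fin_three]
  generalize deriv (deriv (deriv (deriv f))) x = s at hode4 ⊢
  generalize deriv (deriv (deriv f)) x = r at h3 hode4 ⊢
  generalize deriv (deriv f) x = q at h2 h3 hode4 ⊢
  generalize deriv f x = p at h2 h3 hode4 ⊢
  generalize f x = u at h2 h3 hode4 ⊢
  simp only [Matrix.of_apply, Matrix.cons_val', Matrix.cons_val_zero, Matrix.cons_val_one,
    Matrix.cons_val_two, Matrix.empty_val', Matrix.cons_val_fin_one, Matrix.head_cons,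
    Matrix.tail_cons, Matrix.head_fin_const]
  have hq : q = (a * p - x * u) / x := by field_simp; linarith
  have hr : r = ((a - 1) * q - u - x * p) / x := by field_simp; linarith
  have hs : s = ((a - 2) * r - 2 * p - x * q) / x := by field_simp; linarith
  rw [hs, hr, hq]
  field_simp
  ring

lemma w_pos_of_ode (hf : ContDiff ℝ ∞ f)
    (hode : ∀ x, x * deriv (deriv f) x = a * deriv f x - x * f x) (ha : 2 ≤ a) {x : ℝ}
    (hx : 0 < x) (hu : 0 < f x) (hp : deriv f x < 0) : 0 < w f x := by
  obtain ⟨q, hq, hqp⟩ : ∃ q, 0 < q ∧ deriv f x = -q := ⟨-deriv f x, by linarith, by ring⟩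
  have h := pow_four_mul_w_of_ode hf hode hx.ne'
  rw [hqp] at h
  have hpos : 0 < x ^ 4 * w f x := by
    have c1 : 0 < 2 * a := by linarith
    have c2 : 0 ≤ a * (3 * a - 2) := by nlinarith
    have c3 : 0 ≤ 2 * a * x ^ 2 + a ^ 2 * (a - 1) := by nlinarith [sq_nonneg x, sq_nonneg a]
    have c4 : 0 ≤ a * (a - 2) := by nlinarith
    calc (0 : ℝ) < 2 * a * (x ^ 2 * f x ^ 3) + a * (3 * a - 2) * (x * q * f x ^ 2)
          + (2 * a * x ^ 2 + a ^ 2 * (a - 1)) * (q ^ 2 * f x) + a * (a - 2) * (x * q ^ 3) := by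
          have t1 := mul_pos c1 (by positivity : 0 < x ^ 2 * f x ^ 3)
          have t2 := mul_nonneg c2 (by positivity : 0 ≤ x * q * f x ^ 2)
          have t3 := mul_nonneg c3 (by positivity : 0 ≤ q ^ 2 * f x)
          have t4 := mul_nonneg c4 (by positivity : 0 ≤ x * q ^ 3)
          linarith
      _ = x ^ 4 * w f x := by rw [h]; ring
  exact pos_of_mul_pos_right hpos (by positivity)

end ODE

lemma hasSum_integral_of_hasSum_monomials {c : ℕ → ℝ} {e : ℕ → ℕ} {f : ℝ → ℝ} {x : ℝ}
    (hx : 0 ≤ x) (hf : ∀ t ∈ Ioc 0 x, HasSum (fun k => c k * t ^ e k) (f t))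
    (hs : Summable fun k => |c k| * x ^ e k) :
    HasSum (fun k => c k * (x ^ (e k + 1) / (e k + 1))) (∫ t in 0..x, f t) := by
  have hI : uIoc 0 x = Ioc 0 x := uIoc_of_le hx
  have h := intervalIntegral.hasSum_integral_of_dominated_convergence (μ := volume)
    (F := fun k t => c k * t ^ e k) (fun k _ => |c k| * x ^ e k)
    (fun k => (continuous_const.mul (continuous_pow _)).aestronglyMeasurable)
    (fun k => ae_of_all _ fun t ht => ?_) (ae_of_all _ fun _ _ => hs)
    intervalIntegrable_const
    (ae_of_all _ fun t ht => hf t (hI ▸ ht))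
  · simpa only [intervalIntegral.integral_const_mul, integral_pow, ne_eq, add_eq_zero,
      one_ne_zero, and_false, not_false_eq_true, zero_pow, sub_zero, Nat.cast_add,
      Nat.cast_one] using h
  · rw [hI] at ht
    rw [norm_mul, norm_pow, Real.norm_eq_abs, Real.norm_eq_abs, abs_of_pos ht.1]
    exact mul_le_mul_of_nonneg_left (pow_le_pow_left₀ ht.1.le ht.2 _) (abs_nonneg _)

lemma rpow_natCast_add_half {x : ℝ} (hx : 0 ≤ x) (n : ℕ) : x ^ ((n : ℝ) + 1 / 2) = x ^ n * √x := by
  rcases hx.eq_or_lt with rfl | hx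
  · rw [zero_rpow (by positivity)]; simp
  rw [rpow_add hx, rpow_natCast, sqrt_eq_rpow]

lemma continuous_fn : ∀ n, Continuous (fn n)
  | 0 => Real.continuous_sin
  | n + 1 => by
    have h : Continuous fun t : ℝ => t * fn n t := continuous_id.mul (continuous_fn n)
    exact intervalIntegral.continuous_primitive (fun a b => h.intervalIntegrable a b) 0

lemma hasDerivAt_fn_succ (n : ℕ) (x : ℝ) : HasDerivAt (fn (n + 1)) (x * fn n x) x := by
  have h : Continuous fun t : ℝ => t * fn n t := continuous_id.mul (continuous_fn n)
  exact intervalIntegral.integral_hasDerivAt_right (h.intervalIntegrable _ _)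
    (h.stronglyMeasurableAtFilter _ _) h.continuousAt

lemma deriv_fn_succ (n : ℕ) : deriv (fn (n + 1)) = fun x => x * fn n x :=
  funext fun x => (hasDerivAt_fn_succ n x).deriv

lemma fn_apply_zero : ∀ n, fn n 0 = 0
  | 0 => Real.sin_zero
  | _ + 1 => intervalIntegral.integral_same

lemma contDiff_fn : ∀ n, ContDiff ℝ ∞ (fn n)
  | 0 => Real.contDiff_sin
  | n + 1 => contDiff_infty_iff_deriv.mpr
      ⟨fun x => (hasDerivAt_fn_succ n x).differentiableAt, by
        rw [deriv_fn_succ]; exact contDiff_id.mul (contDiff_fn n)⟩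

lemma differentiable_fn (n : ℕ) : Differentiable ℝ (fn n) :=
  (contDiff_fn n).differentiable (by simp)

lemma differentiable_deriv_fn (n : ℕ) : Differentiable ℝ (deriv (fn n)) :=
  (contDiff_infty_iff_deriv.mp (contDiff_fn n)).2.differentiable (by simp)

lemma fn_one : fn 1 = fun x => sin x - x * cos x := by
  refine eq_of_hasDerivAt_eq (hasDerivAt_fn_succ 0) (fun x => ?_) 0 (by simp [fn_apply_zero])
  exact ((hasDerivAt_sin x).sub ((hasDerivAt_id' x).mul (hasDerivAt_cos x))).congr_deriv
    (by simp only [fn]; ring)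

lemma mul_deriv_fn : ∀ (m : ℕ) (x : ℝ),
    x * deriv (fn m) x = (2 * m + 1) * fn m x - fn (m + 1) x
  | 0, x => by rw [fn_one]; simp [fn]
  | m + 1, x => by
    have hrec : fn (m + 2) = fun y => (2 * m + 3) * fn (m + 1) y - y ^ 2 * fn m y := by
      refine eq_of_hasDerivAt_eq (hasDerivAt_fn_succ (m + 1)) (fun y => ?_) 0
        (by simp [fn_apply_zero])
      refine (((hasDerivAt_fn_succ m y).const_mul _).sub
        ((hasDerivAt_pow 2 y).mul (differentiable_fn m y).hasDerivAt)).congr_deriv ?_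
      linear_combination (-y) * mul_deriv_fn m y
    rw [deriv_fn_succ, hrec]
    push_cast
    ring

lemma mul_deriv_deriv_fn (n : ℕ) (x : ℝ) :
    x * deriv (deriv (fn n)) x = 2 * n * deriv (fn n) x - x * fn n x := by
  have h := mul_deriv_deriv_eq_of_mul_deriv_eq (r := fun y => -fn (n + 1) y) (differentiable_fn n)
    (differentiable_deriv_fn n) (differentiable_fn (n + 1)).neg (mul_deriv_fn n) x
  rw [h, deriv.fun_neg, deriv_fn_succ]
  ring

lemma fn_pos_of_mem_Ioo : ∀ (n : ℕ) {x : ℝ}, x ∈ Ioo 0 π → 0 < fn n x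
  | 0, _, hx => sin_pos_of_pos_of_lt_pi hx.1 hx.2
  | n + 1, _, hx => intervalIntegral.intervalIntegral_pos_of_pos_on
      ((continuous_id.mul (continuous_fn n)).intervalIntegrable _ _)
      (fun _ ht => mul_pos ht.1 (fn_pos_of_mem_Ioo n ⟨ht.1, ht.2.trans hx.2⟩)) hx.1

noncomputable def fnCoeff (m k : ℕ) : ℝ :=
  (-1) ^ k / (2 ^ k * k ! * (2 * (k + m) + 1)‼)

lemma fnCoeff_zero (k : ℕ) : fnCoeff 0 k = (-1) ^ k / (2 * k + 1)! := by
  rw [fnCoeff, add_zero, Nat.factorial_eq_mul_doubleFactorial, Nat.doubleFactorial_two_mul]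
  push_cast
  ring

lemma fnCoeff_succ (m k : ℕ) : fnCoeff (m + 1) k = fnCoeff m k / (2 * k + 2 * m + 3) := by
  rw [fnCoeff, fnCoeff, show 2 * (k + (m + 1)) + 1 = 2 * (k + m) + 1 + 2 by ring,
    Nat.doubleFactorial_add_two]
  push_cast
  rw [div_div]
  ring

lemma abs_fnCoeff_le (m k : ℕ) : |fnCoeff m k| ≤ 1 / (2 ^ k * k !) := by
  have h : (1 : ℝ) ≤ (2 * (k + m) + 1)‼ := by exact_mod_cast Nat.doubleFactorial_pos _
  rw [fnCoeff, abs_div, abs_pow, abs_neg, abs_one, one_pow, abs_of_pos (by positivity)]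
  exact one_div_le_one_div_of_le (by positivity) (le_mul_of_one_le_right (by positivity) h)

lemma hasSum_fn : ∀ (m : ℕ) {x : ℝ}, 0 < x →
    HasSum (fun k => fnCoeff m k * x ^ (2 * k + 2 * m + 1)) (fn m x)
  | 0, x, _ => by
    show HasSum _ (sin x)
    simpa [fnCoeff_zero, div_mul_eq_mul_div] using Real.hasSum_sin x
  | m + 1, x, hx => by
    have hs : Summable fun k => |fnCoeff m k| * x ^ (2 * k + 2 * m + 2) := by
      refine .of_nonneg_of_le (fun k => by positivity) (fun k => ?_)
        ((summable_pow_div_factorial (x ^ 2 / 2)).mul_left (x ^ (2 * m + 2)))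
      calc |fnCoeff m k| * x ^ (2 * k + 2 * m + 2)
          ≤ 1 / (2 ^ k * k !) * x ^ (2 * k + 2 * m + 2) := by
            gcongr
            exact abs_fnCoeff_le m k
        _ = x ^ (2 * m + 2) * ((x ^ 2 / 2) ^ k / k !) := by
            rw [div_pow, ← pow_mul]
            field_simp
            ring
    have h := hasSum_integral_of_hasSum_monomials (e := fun k => 2 * k + 2 * m + 2)
      (f := fun t => t * fn m t) hx.le (fun t ht => ?_) hs
    · show HasSum _ (∫ t in (0 : ℝ)..x, t * fn m t)
      convert h using 2 with k
      rw [fnCoeff_succ]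
      push_cast
      field_simp
      ring
    · have h := (hasSum_fn m ht.1).mul_right t
      simp only [mul_assoc, ← pow_succ, mul_comm (fn m t)] at h
      exact h

lemma fn_eq_besselJ (m : ℕ) {x : ℝ} (hx : 0 < x) :
    fn m x = √(π / 2) * x ^ ((m : ℝ) + 1 / 2) * besselJ ((m : ℝ) + 1 / 2) x := by
  rw [besselJ, ← tsum_mul_left, ← (hasSum_fn m hx).tsum_eq]
  refine tsum_congr fun k => ?_
  have hΓ : Gamma (k + ((m : ℝ) + 1 / 2) + 1) = (2 * (k + m) + 1)‼ * √π / 2 ^ (k + m + 1) := by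
    rw [show (k : ℝ) + (m + 1 / 2) + 1 = ((k + m : ℕ) : ℝ) + 1 + 1 / 2 by push_cast; ring]
    exact Gamma_nat_add_one_add_half _
  rw [hΓ, show 2 * (k : ℝ) + (m + 1 / 2) = ((2 * k + m : ℕ) : ℝ) + 1 / 2 by push_cast; ring,
    rpow_natCast_add_half hx.le, rpow_natCast_add_half (by positivity), sqrt_div hx.le,
    sqrt_div' π zero_le_two, fnCoeff]
  field_simp
  rw [sq_sqrt zero_le_two, sq_sqrt hx.le, div_pow]
  field_simp
  ring

lemma j1_besselJ (m : ℕ) : j1 (besselJ ((m : ℝ) + 1 / 2)) = j1 (fn m) :=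
  j1_congr fun x hx => by
    have hc : √(π / 2) * x ^ ((m : ℝ) + 1 / 2) ≠ 0 := by positivity
    rw [fn_eq_besselJ m hx, mul_eq_zero, or_iff_right hc]

lemma j1_deriv_fn_succ (m : ℕ) : j1 (deriv (fn (m + 1))) = j1 (fn m) :=
  j1_congr fun x hx => by rw [deriv_fn_succ, mul_eq_zero, or_iff_right hx.ne']

lemma w_fn_pos_of_mem_Ioo {n : ℕ} (hn : 1 ≤ n) {x : ℝ}
    (hx : x ∈ Ioo (j1 (deriv (fn n))) (j1 (fn n))) : 0 < w (fn n) x := by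
  have hx0 : 0 < x := (j1_nonneg _).trans_lt hx.1
  have hpos : ∀ y, 0 < y → y < j1 (fn n) → 0 < fn n y := fun y hy hyj =>
    pos_of_lt_j1 (continuous_fn n) pi_pos (fun _ => fn_pos_of_mem_Ioo n) hy hyj
  obtain ⟨y₀, hy₀, hfy₀⟩ := exists_zero_of_j1_pos (hx0.trans hx.2)
  obtain ⟨c, hc, hc0⟩ := exists_deriv_eq_zero hy₀ (continuous_fn n).continuousOn
    (by rw [fn_apply_zero, hfy₀])
  obtain ⟨z, hz, hzx, hz0⟩ := exists_zero_lt_of_j1_lt ⟨c, hc.1, hc0⟩ hx.1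
  have hderiv : deriv (fn n) x < 0 :=
    deriv_neg_of_ode (differentiable_deriv_fn n) (mul_deriv_deriv_fn n) hz hzx hz0
      fun y hy => hpos y (hz.trans hy.1) (hy.2.trans hx.2)
  exact w_pos_of_ode (contDiff_fn n) (mul_deriv_deriv_fn n) (by norm_cast; omega) hx0
    (hpos x hx0 hx.2) hderiv

theorem stmt_13 (n : ℕ) (hn : 1 ≤ n) :
    (∀ x ∈ Set.Ioo (j1 (deriv (fn n))) (j1 (fn n)), 0 < w (fn n) x) ∧
    j1 (deriv (fn n)) = j1 (besselJ ((n : ℝ) - 1 / 2)) ∧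
    j1 (fn n) = j1 (besselJ ((n : ℝ) + 1 / 2)) := by
  refine ⟨fun x hx => w_fn_pos_of_mem_Ioo hn hx, ?_, (j1_besselJ n).symm⟩
  obtain ⟨m, rfl⟩ : ∃ m, n = m + 1 := ⟨n - 1, by omega⟩
  rw [j1_deriv_fn_succ, show ((m + 1 : ℕ) : ℝ) - 1 / 2 = m + 1 / 2 by push_cast; ring, j1_besselJ]
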